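/- arXiv:2206.11265 — 5 statements merged into one kernel-verified Lean document; each statement's English description precedes it below -/
import Mathlib

section
/- Let (a, m, b) be a triple of natural numbers with a ≤ m ≤ b and let n be a positive natural number. Then the remainder triple of the fuzzy L-operator, (a − ⌊b/n⌋·n, m − ⌊m/n⌋·n, b − ⌊a/n⌋·n), computed in the integers, satisfies a − ⌊b/n⌋·n ≤ m − ⌊m/n⌋·n ≤ b − ⌊a/n⌋·n; moreover its mode equals m mod n, hence satisfies 0 ≤ m − ⌊m/n⌋·n < n. -/
/-- The remainder triple `(a − ⌊b/n⌋·n, m − ⌊m/n⌋·n, b − ⌊a/n⌋·n)` of the fuzzy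
L-operator, computed in `ℤ`, is increasingly ordered, its mode equals `m % n`,
and hence the mode satisfies `0 ≤ m − ⌊m/n⌋·n < n`. -/
theorem L_operator_fuzzy_cardinal_remainder
    (a m b n : ℕ) (hn : 0 < n) (ham : a ≤ m) (hmb : m ≤ b) :
    ((a : ℤ) - (b / n : ℕ) * n ≤ (m : ℤ) - (m / n : ℕ) * n ∧
        (m : ℤ) - (m / n : ℕ) * n ≤ (b : ℤ) - (a / n : ℕ) * n) ∧
      (m : ℤ) - (m / n : ℕ) * n = (m % n : ℕ) ∧
      0 ≤ (m : ℤ) - (m / n : ℕ) * n ∧ (m : ℤ) - (m / n : ℕ) * n < n := by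
  have h1 : ((m / n : ℕ) : ℤ) * n ≤ ((b / n : ℕ) : ℤ) * n := by
    exact_mod_cast Nat.mul_le_mul_right n (Nat.div_le_div_right hmb)
  have h2 : ((a / n : ℕ) : ℤ) * n ≤ ((m / n : ℕ) : ℤ) * n := by
    exact_mod_cast Nat.mul_le_mul_right n (Nat.div_le_div_right ham)
  have hmodZ : ((m % n : ℕ) : ℤ) + (n : ℤ) * ((m / n : ℕ) : ℤ) = m := by
    exact_mod_cast Nat.mod_add_div m n
  have hlt : ((m % n : ℕ) : ℤ) < n := by exact_mod_cast Nat.mod_lt m hn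
  have hnn : (0 : ℤ) ≤ ((m % n : ℕ) : ℤ) := Int.natCast_nonneg _
  have hamZ : (a : ℤ) ≤ m := by exact_mod_cast ham
  have hmbZ : (m : ℤ) ≤ b := by exact_mod_cast hmb
  refine ⟨⟨by linarith, by linarith⟩, by linarith, by linarith, by linarith⟩
end

section
/- Let N be a natural number and let (a_n, m_n, b_n) be a triple of natural numbers with 0 < a_n ≤ m_n ≤ b_n. Then the remainder triple of the L-operator with fuzzy radix, (N − ⌊N/a_n⌋·b_n, N − ⌊N/m_n⌋·m_n, N − ⌊N/b_n⌋·a_n), computed in the integers, satisfies N − ⌊N/a_n⌋·b_n ≤ N − ⌊N/m_n⌋·m_n ≤ N − ⌊N/b_n⌋·a_n; moreover its mode N − ⌊N/m_n⌋·m_n and its right bound N − ⌊N/b_n⌋·a_n are nonnegative. -/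
/-- The remainder triple of the L-operator with crisp cardinal `N` and fuzzy
radix `(a_n, m_n, b_n)`, computed in `ℤ`, is increasingly ordered and its mode
and right bound are nonnegative. -/
theorem L_operator_fuzzy_radix_remainder
    (N an mn bn : ℕ) (ha : 0 < an) (han : an ≤ mn) (hmn : mn ≤ bn) :
    ((N : ℤ) - (N / an : ℕ) * bn ≤ (N : ℤ) - (N / mn : ℕ) * mn ∧
        (N : ℤ) - (N / mn : ℕ) * mn ≤ (N : ℤ) - (N / bn : ℕ) * an) ∧
      0 ≤ (N : ℤ) - (N / mn : ℕ) * mn ∧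
      0 ≤ (N : ℤ) - (N / bn : ℕ) * an := by
  have h1 : N / mn * mn ≤ N / an * bn :=
    Nat.mul_le_mul (Nat.div_le_div_left han ha) hmn
  have h2 : N / bn * an ≤ N / mn * mn :=
    Nat.mul_le_mul (Nat.div_le_div_left hmn (lt_of_lt_of_le ha han)) han
  have h3 : N / mn * mn ≤ N := Nat.div_mul_le_self N mn
  have h4 : N / bn * an ≤ N := le_trans h2 h3
  have h1' : ((N / mn : ℕ) : ℤ) * mn ≤ ((N / an : ℕ) : ℤ) * bn := by exact_mod_cast h1
  have h2' : ((N / bn : ℕ) : ℤ) * an ≤ ((N / mn : ℕ) : ℤ) * mn := by exact_mod_cast h2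
  have h3' : ((N / mn : ℕ) : ℤ) * mn ≤ (N : ℤ) := by exact_mod_cast h3
  have h4' : ((N / bn : ℕ) : ℤ) * an ≤ (N : ℤ) := by exact_mod_cast h4
  refine ⟨⟨?_, ?_⟩, ?_, ?_⟩ <;> omega
end

section
/- Let (a_N, m_N, b_N) be a triple of natural numbers with a_N ≤ m_N ≤ b_N and let (a_n, m_n, b_n) be a triple of natural numbers with 0 < a_n ≤ m_n ≤ b_n. Then the whole-fuzziness remainder triple of the L-operator, (a_N − ⌊b_N/a_n⌋·b_n, m_N − ⌊m_N/m_n⌋·m_n, b_N − ⌊a_N/b_n⌋·a_n), computed in the integers, satisfies a_N − ⌊b_N/a_n⌋·b_n ≤ m_N − ⌊m_N/m_n⌋·m_n ≤ b_N − ⌊a_N/b_n⌋·a_n; moreover its mode m_N − ⌊m_N/m_n⌋·m_n is nonnegative. -/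
/-- The whole-fuzziness remainder triple of the L-operator, computed in `ℤ`,
is increasingly ordered and its mode is nonnegative. -/
theorem L_operator_whole_fuzziness_remainder
    (aN mN bN an mn bn : ℕ)
    (haN : aN ≤ mN) (hmN : mN ≤ bN)
    (ha : 0 < an) (han : an ≤ mn) (hmn : mn ≤ bn) :
    ((aN : ℤ) - (bN / an : ℕ) * bn ≤ (mN : ℤ) - (mN / mn : ℕ) * mn ∧
        (mN : ℤ) - (mN / mn : ℕ) * mn ≤ (bN : ℤ) - (aN / bn : ℕ) * an) ∧
      0 ≤ (mN : ℤ) - (mN / mn : ℕ) * mn := by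
  have hmn0 : 0 < mn := lt_of_lt_of_le ha han
  have hbn0 : 0 < bn := lt_of_lt_of_le hmn0 hmn
  have h1 : (mN / mn) * mn ≤ (bN / an) * bn :=
    Nat.mul_le_mul (Nat.div_le_div hmN han ha.ne') hmn
  have h2 : (aN / bn) * an ≤ (mN / mn) * mn :=
    Nat.mul_le_mul (Nat.div_le_div haN hmn hmn0.ne') han
  have h3 : (mN / mn) * mn ≤ mN := Nat.div_mul_le_self mN mn
  refine ⟨⟨?_, ?_⟩, ?_⟩
  · have := Int.ofNat_le.mpr h1
    push_cast at this ⊢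
    have haNm := Int.ofNat_le.mpr haN
    push_cast at haNm
    linarith
  · have := Int.ofNat_le.mpr h2
    have hmNb := Int.ofNat_le.mpr hmN
    push_cast at this hmNb ⊢
    linarith
  · have := Int.ofNat_le.mpr h3
    push_cast at this ⊢
    linarith
end

section
/- Let I be a nonempty finite index set; for each i ∈ I let (a_i, m_i, b_i) be a triple of natural numbers with a_i ≤ m_i ≤ b_i (fuzzy cardinals) and n_i a positive natural number (crisp radices). Define the fuzzy common carry p̃ = (min_{j∈I}⌊a_j/n_j⌋, min_{j∈I}⌊m_j/n_j⌋, min_{j∈I}⌊b_j/n_j⌋). Then for every i ∈ I, the remainder triple (a_i − min_{j∈I}⌊b_j/n_j⌋·n_i, m_i − min_{j∈I}⌊m_j/n_j⌋·n_i, b_i − min_{j∈I}⌊a_j/n_j⌋·n_i), computed in the integers, is increasingly ordered (left bound ≤ mode ≤ right bound), and its mode m_i − min_{j∈I}⌊m_j/n_j⌋·n_i is nonnegative. -/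
/-- In the fuzzy F-operator with fuzzy cardinals `(a i, m i, b i)` and crisp
radices `n i > 0`, for each operand the remainder triple obtained from the
min-formed fuzzy common carry is increasingly ordered and its mode is
nonnegative. -/
theorem F_operator_fuzzy_inputs_remainders
    {I : Type*} [Fintype I] [Nonempty I]
    (a m b n : I → ℕ) (ham : ∀ i, a i ≤ m i) (hmb : ∀ i, m i ≤ b i)
    (hn : ∀ i, 0 < n i) :
    ∀ i : I,
      ((a i : ℤ) -
            (Finset.univ.inf' Finset.univ_nonempty (fun j => b j / n j) : ℕ) * n i ≤
          (m i : ℤ) -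
            (Finset.univ.inf' Finset.univ_nonempty (fun j => m j / n j) : ℕ) * n i ∧
        (m i : ℤ) -
            (Finset.univ.inf' Finset.univ_nonempty (fun j => m j / n j) : ℕ) * n i ≤
          (b i : ℤ) -
            (Finset.univ.inf' Finset.univ_nonempty (fun j => a j / n j) : ℕ) * n i) ∧
      0 ≤ (m i : ℤ) -
          (Finset.univ.inf' Finset.univ_nonempty (fun j => m j / n j) : ℕ) * n i := by
  intro i
  set A := Finset.univ.inf' Finset.univ_nonempty (fun j => a j / n j) with hA
  set M := Finset.univ.inf' Finset.univ_nonempty (fun j => m j / n j) with hM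
  set B := Finset.univ.inf' Finset.univ_nonempty (fun j => b j / n j) with hB
  have hAM : A ≤ M := Finset.le_inf' _ _ (fun j _ =>
    le_trans (Finset.inf'_le _ (Finset.mem_univ j)) (Nat.div_le_div_right (ham j)))
  have hMB : M ≤ B := Finset.le_inf' _ _ (fun j _ =>
    le_trans (Finset.inf'_le _ (Finset.mem_univ j)) (Nat.div_le_div_right (hmb j)))
  have hMle : M * n i ≤ m i := by
    calc M * n i ≤ (m i / n i) * n i := by
          exact Nat.mul_le_mul_right _ (Finset.inf'_le _ (Finset.mem_univ i))
      _ ≤ m i := Nat.div_mul_le_self _ _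
  have h1 : (A : ℤ) ≤ M := by exact_mod_cast hAM
  have h2 : (M : ℤ) ≤ B := by exact_mod_cast hMB
  have hni : (0 : ℤ) ≤ n i := by positivity
  refine ⟨⟨?_, ?_⟩, ?_⟩
  · have := mul_le_mul_of_nonneg_right h2 hni
    have ha : (a i : ℤ) ≤ m i := by exact_mod_cast ham i
    linarith
  · have := mul_le_mul_of_nonneg_right h1 hni
    have hbm : (m i : ℤ) ≤ b i := by exact_mod_cast hmb i
    linarith
  · have : (M : ℤ) * n i ≤ m i := by exact_mod_cast hMle
    linarith
end

section
/- Let I be a nonempty finite index set; for each i ∈ I let (a_{N_i}, m_{N_i}, b_{N_i}) be natural numbers with a_{N_i} ≤ m_{N_i} ≤ b_{N_i} and (a_{n_i}, m_{n_i}, b_{n_i}) natural numbers with 0 < a_{n_i} ≤ m_{n_i} ≤ b_{n_i}. Then for every i ∈ I the whole-fuzziness remainder triple of the F-operator, (a_{N_i} − min_{j∈I}⌊b_{N_j}/a_{n_j}⌋·b_{n_i}, m_{N_i} − min_{j∈I}⌊m_{N_j}/m_{n_j}⌋·m_{n_i}, b_{N_i} − min_{j∈I}⌊a_{N_j}/b_{n_j}⌋·a_{n_i}),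 computed in the integers, is increasingly ordered (left bound ≤ mode ≤ right bound). -/
/-- In the fuzzy F-operator under whole fuzziness, each remainder triple,
computed in `ℤ`, is increasingly ordered. -/
theorem F_operator_whole_fuzziness_remainders_ordered
    {I : Type*} [Fintype I] [Nonempty I]
    (aN mN bN an mn bn : I → ℕ)
    (haN : ∀ i, aN i ≤ mN i) (hmN : ∀ i, mN i ≤ bN i)
    (ha : ∀ i, 0 < an i) (han : ∀ i, an i ≤ mn i) (hmn : ∀ i, mn i ≤ bn i) :
    ∀ i : I,
      (aN i : ℤ) -
          (Finset.univ.inf' Finset.univ_nonempty (fun j => bN j / an j) : ℕ) * bn i ≤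
        (mN i : ℤ) -
          (Finset.univ.inf' Finset.univ_nonempty (fun j => mN j / mn j) : ℕ) * mn i ∧
      (mN i : ℤ) -
          (Finset.univ.inf' Finset.univ_nonempty (fun j => mN j / mn j) : ℕ) * mn i ≤
        (bN i : ℤ) -
          (Finset.univ.inf' Finset.univ_nonempty (fun j => aN j / bn j) : ℕ) * an i := by
  intro i
  set pa := Finset.univ.inf' Finset.univ_nonempty (fun j => aN j / bn j) with hpa
  set pm := Finset.univ.inf' Finset.univ_nonempty (fun j => mN j / mn j) with hpm
  set pb := Finset.univ.inf' Finset.univ_nonempty (fun j => bN j / an j) with hpb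
  have h1 : pm ≤ pb := by
    rw [hpm, hpb]
    apply Finset.le_inf'
    intro j _
    calc Finset.univ.inf' Finset.univ_nonempty (fun j => mN j / mn j) ≤ mN j / mn j :=
          Finset.inf'_le _ (Finset.mem_univ j)
      _ ≤ bN j / an j := Nat.div_le_div (hmN j) (han j) (ha j).ne'
  have h2 : pa ≤ pm := by
    rw [hpa, hpm]
    apply Finset.le_inf'
    intro j _
    calc Finset.univ.inf' Finset.univ_nonempty (fun j => aN j / bn j) ≤ aN j / bn j :=
          Finset.inf'_le _ (Finset.mem_univ j)
      _ ≤ mN j / mn j := Nat.div_le_div (haN j) (hmn j)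
          (lt_of_lt_of_le (ha j) (han j)).ne'
  constructor
  · have hm : (pm : ℤ) * mn i ≤ (pb : ℤ) * bn i := by
      have := Nat.mul_le_mul h1 (hmn i)
      exact_mod_cast this
    have hN : (aN i : ℤ) ≤ mN i := by exact_mod_cast haN i
    linarith
  · have hm : (pa : ℤ) * an i ≤ (pm : ℤ) * mn i := by
      have := Nat.mul_le_mul h2 (han i)
      exact_mod_cast this
    have hN : (mN i : ℤ) ≤ bN i := by exact_mod_cast hmN i
    linarith
end
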